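/- arXiv:1709.01310 — 2 statements merged into one kernel-verified Lean document; each statement's English description precedes it below -/
import Mathlib

section
/- (Lemma 5.1(ii).) Let α ∈ ℝ, let L : (0,∞) → (0,∞) be slowly varying at 0, continuously differentiable on (0,∞), bounded away from 0 on every interval (u, √2] with u > 0, and satisfy |L′(x)| ≤ C(1 + x^{−1}) for all x ∈ (0,1] and some C > 0. Then for every j ∈ ℤ²\{(0,0)} and every b_j ∈ □j, lim_{n→∞} ∫_{□j} ‖x‖^{2α} ( L(‖x‖/n)/L(1/n) − L(‖b_j‖/n)/L(1/n) )² dx = 0. -/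
open MeasureTheory Filter Set Real

noncomputable section

abbrev E2 : Type := EuclideanSpace ℝ (Fin 2)

/-- The closed square of side length `r` centred at `c`. -/
def sqC (c : E2) (r : ℝ) : Set E2 :=
  {x : E2 | |x 0 - c 0| ≤ r / 2 ∧ |x 1 - c 1| ≤ r / 2}

/-- The point of `ℝ²` corresponding to `j ∈ ℤ²`. -/
def jv (j : ℤ × ℤ) : E2 := WithLp.toLp 2 ![(j.1 : ℝ), (j.2 : ℝ)]

/-- `L` is slowly varying at `0`. -/
def SlowlyVaryingAtZero (L : ℝ → ℝ) : Prop :=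
  ∀ δ : ℝ, 0 < δ → Tendsto (fun x => L (δ * x) / L x) (nhdsWithin 0 (Set.Ioi 0)) (nhds 1)

/-!
Karamata's uniform convergence theorem does the work. Put
`logRatio L c x = log L(e^c x) - log L x`: slow variation says `logRatio L c x → 0` as `x → 0⁺`
for each fixed `c`, and `c ↦ logRatio L c` is an additive cocycle. By continuity of measure, for
small `η` the set of `c ∈ [0, 2T]` with `|logRatio L c x| ≤ ε` on `(0, η]` has measure `> 3T/2`,
so for every `|c| ≤ T` it contains some `d` together with `d - c`, and the cocycle identity bounds
`logRatio L c x` uniformly in `c`. Hence `L(δ/n)/L(1/n) → 1` uniformly for `δ` in a compact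
subset of `(0, ∞)`, in particular for `δ = ‖x‖`, `x ∈ □j` (where `‖x‖ ≥ 1/2` since `j ≠ 0`), and
the integrand tends to `0` uniformly on the compact square.
-/

open Topology

theorem exists_mem_sub_mem_of_volume_gt {S : Set ℝ} {a b c : ℝ} (hSm : MeasurableSet S)
    (hS : S ⊆ Icc a b) (hvol : ENNReal.ofReal ((b - a + |c|) / 2) < volume S) :
    ∃ y ∈ S, y - c ∈ S := by
  by_contra! hdisj
  set T := (· - c) ⁻¹' S
  have hT : volume T = volume S := by
    simp [T, sub_eq_add_neg]
  have hunion : S ∪ T ⊆ Icc (a + min 0 c) (b + max 0 c) := by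
    rintro y (hy | hy)
    · exact ⟨by linarith [(hS hy).1, min_le_left 0 c], by linarith [(hS hy).2, le_max_left 0 c]⟩
    · exact ⟨by linarith [(hS hy).1, min_le_right 0 c], by linarith [(hS hy).2, le_max_right 0 c]⟩
  set d := b - a + |c|
  have hlt : ENNReal.ofReal d < ENNReal.ofReal d := calc
    ENNReal.ofReal d = ENNReal.ofReal (d / 2 + d / 2) := by rw [add_halves]
    _ ≤ ENNReal.ofReal (d / 2) + ENNReal.ofReal (d / 2) := ENNReal.ofReal_add_le
    _ < volume S + volume T := ENNReal.add_lt_add hvol (hT ▸ hvol)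
    _ = volume (S ∪ T) := (measure_union (disjoint_left.2 hdisj)
        (hSm.preimage (measurable_sub_const c))).symm
    _ ≤ volume (Icc (a + min 0 c) (b + max 0 c)) := measure_mono hunion
    _ = ENNReal.ofReal d := by
        have hc : max 0 c - min 0 c = |c| := by simpa using max_sub_min_eq_abs 0 c
        rw [Real.volume_Icc, show d = b - a + |c| from rfl, ← hc]
        ring_nf
  exact hlt.false

def logRatio (L : ℝ → ℝ) (c x : ℝ) : ℝ := log (L (exp c * x)) - log (L x)

theorem logRatio_add (L : ℝ → ℝ) (c d x : ℝ) :
    logRatio L (c + d) x = logRatio L c (exp d * x) + logRatio L d x := by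
  simp only [logRatio, exp_add, mul_assoc]
  ring

section

variable {L : ℝ → ℝ} (hLpos : ∀ x, 0 < x → 0 < L x)
include hLpos

theorem logRatio_eq_log_div {c x : ℝ} (hx : 0 < x) :
    logRatio L c x = log (L (exp c * x) / L x) :=
  (log_div (hLpos _ (by positivity)).ne' (hLpos x hx).ne').symm

theorem exp_logRatio_log {δ x : ℝ} (hδ : 0 < δ) (hx : 0 < x) :
    exp (logRatio L (log δ) x) = L (δ * x) / L x := by
  rw [logRatio_eq_log_div hLpos hx, exp_log hδ,
    exp_log (div_pos (hLpos _ (by positivity)) (hLpos x hx))]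

theorem continuous_logRatio_left (hL : ContinuousOn L (Ioi 0)) {x : ℝ} (hx : 0 < x) :
    Continuous fun c => logRatio L c x := by
  have hpos (c : ℝ) : 0 < exp c * x := by positivity
  have hcomp : Continuous fun c => L (exp c * x) :=
    hL.comp_continuous (by fun_prop) hpos
  exact (hcomp.log fun c => (hLpos _ (hpos c)).ne').sub continuous_const

theorem SlowlyVaryingAtZero.tendsto_logRatio (hSV : SlowlyVaryingAtZero L) (c : ℝ) :
    Tendsto (logRatio L c) (𝓝[>] 0) (𝓝 0) := by
  have hlog := (continuousAt_log one_ne_zero).tendsto.comp (hSV _ (exp_pos c))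
  rw [log_one] at hlog
  refine hlog.congr' ?_
  filter_upwards [self_mem_nhdsWithin] with x hx
  exact (logRatio_eq_log_div hLpos hx).symm

theorem SlowlyVaryingAtZero.exists_large_set_abs_logRatio_le (hSV : SlowlyVaryingAtZero L)
    (hL : ContinuousOn L (Ioi 0)) {a b ε : ℝ} {r : ENNReal} (hr : r < volume (Icc a b))
    (hε : 0 < ε) :
    ∃ η > 0, ∃ S ⊆ Icc a b, MeasurableSet S ∧ r < volume S ∧
      ∀ c ∈ S, ∀ x ∈ Ioc 0 η, |logRatio L c x| ≤ ε := by
  set S : ℕ → Set ℝ := fun m =>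
    Icc a b ∩ {c | ∀ x ∈ Ioc 0 (1 / (m + 1 : ℝ)), |logRatio L c x| ≤ ε}
  have hS_closed (m : ℕ) : IsClosed (S m) := by
    refine isClosed_Icc.inter ?_
    simp only [ofPred_forall]
    exact isClosed_biInter fun x hx =>
      isClosed_le (continuous_logRatio_left hLpos hL hx.1).abs continuous_const
  have hS_mono : Monotone S := fun m n hmn => inter_subset_inter_right _ fun c hc x hx =>
    hc x ⟨hx.1, hx.2.trans (Nat.one_div_le_one_div hmn)⟩
  have hS_union : ⋃ m, S m = Icc a b := by
    refine (iUnion_subset fun m => inter_subset_left).antisymm fun c hc => ?_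
    obtain ⟨η, hη, hsmall⟩ := (nhdsGT_basis (0 : ℝ)).eventually_iff.1
      ((hSV.tendsto_logRatio hLpos c).eventually (eventually_abs_sub_lt 0 hε))
    obtain ⟨m, hm⟩ := exists_nat_one_div_lt hη
    exact mem_iUnion.2 ⟨m, hc, fun x hx => by
      simpa using (hsmall ⟨hx.1, hx.2.trans_lt hm⟩).le⟩
  have hvol := tendsto_measure_iUnion_atTop (μ := volume) hS_mono
  rw [hS_union] at hvol
  obtain ⟨M, hM⟩ := (hvol.eventually (eventually_gt_nhds hr)).exists
  exact ⟨1 / (M + 1), by positivity, S M, inter_subset_left, (hS_closed M).measurableSet, hM,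
    fun c hc => hc.2⟩

theorem SlowlyVaryingAtZero.tendstoUniformlyOn_logRatio (hSV : SlowlyVaryingAtZero L)
    (hL : ContinuousOn L (Ioi 0)) {T : ℝ} (hT : 0 < T) :
    TendstoUniformlyOn (fun x c => logRatio L c x) 0 (𝓝[>] 0) (Icc (-T) T) := by
  rw [Metric.tendstoUniformlyOn_iff]
  intro ε hε
  obtain ⟨η, hη, S, hS, hSm, hSvol, hsmall⟩ := hSV.exists_large_set_abs_logRatio_le hLpos hL
    (a := 0) (b := 2 * T) (r := ENNReal.ofReal (3 * T / 2))
    (by rw [Real.volume_Icc]; exact ENNReal.ofReal_lt_ofReal_iff (by linarith) |>.2 (by linarith))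
    (show 0 < ε / 3 by positivity)
  filter_upwards [Ioc_mem_nhdsGT hη] with x hx c hc
  obtain ⟨d, hd, hdc⟩ := exists_mem_sub_mem_of_volume_gt (c := c) hSm hS (hSvol.trans_le' <|
    ENNReal.ofReal_le_ofReal (by linarith [abs_le.2 (mem_Icc.1 hc)]))
  -- transport `x` to `y = e^{c - d} x ≤ x`, where both `d` and `d - c` are good shifts
  set y := exp (-(d - c)) * x
  have hy : y ∈ Ioc 0 η := ⟨mul_pos (exp_pos _) hx.1,
    (mul_le_of_le_one_left hx.1.le (exp_le_one_iff.2 (neg_nonpos.2 (hS hdc).1))).trans hx.2⟩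
  have hxy : exp (d - c) * y = x := by
    rw [← mul_assoc, ← exp_add, add_neg_cancel, exp_zero, one_mul]
  have hcocycle : logRatio L c x = logRatio L d y - logRatio L (d - c) y := by
    have h := logRatio_add L c (d - c) y
    rw [add_sub_cancel, hxy] at h
    linarith
  rw [Pi.zero_apply, dist_zero_left, hcocycle]
  calc ‖logRatio L d y - logRatio L (d - c) y‖
      ≤ ‖logRatio L d y‖ + ‖logRatio L (d - c) y‖ := norm_sub_le _ _
    _ ≤ ε / 3 + ε / 3 := add_le_add (hsmall d hd y hy) (hsmall (d - c) hdc y hy)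
    _ < ε := by linarith

theorem SlowlyVaryingAtZero.tendstoUniformlyOn_div (hSV : SlowlyVaryingAtZero L)
    (hL : ContinuousOn L (Ioi 0)) {a b : ℝ} (ha : 0 < a) :
    TendstoUniformlyOn (fun x δ => L (δ * x) / L x) 1 (𝓝[>] 0) (Icc a b) := by
  set T := max |log a| |log b| + 1
  have hlog := Metric.tendstoUniformlyOn_iff.1
    (hSV.tendstoUniformlyOn_logRatio hLpos hL (show 0 < T by positivity))
  rw [Metric.tendstoUniformlyOn_iff]
  intro ε hε
  filter_upwards [hlog (min 1 (ε / 2)) (by positivity), self_mem_nhdsWithin]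
    with x hsmall hx δ hδ
  have hδ0 : 0 < δ := ha.trans_le hδ.1
  have hlogδ : log δ ∈ Icc (-T) T := by
    constructor
    · linarith [log_le_log ha hδ.1, neg_abs_le (log a), le_max_left |log a| |log b|]
    · linarith [log_le_log hδ0 hδ.2, le_abs_self (log b), le_max_right |log a| |log b|]
  have ht := hsmall (log δ) hlogδ
  rw [Pi.zero_apply, dist_zero_left, Real.norm_eq_abs] at ht
  rw [Pi.one_apply, ← exp_logRatio_log hLpos hδ0 hx, Real.dist_eq, abs_sub_comm]
  calc |exp (logRatio L (log δ) x) - 1| ≤ 2 * |logRatio L (log δ) x| :=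
        abs_exp_sub_one_le (ht.le.trans (min_le_left _ _))
    _ < ε := by linarith [min_le_right 1 (ε / 2)]

end

theorem TendstoUniformlyOn.tendsto_setIntegral_zero {ι α E : Type*} [MeasurableSpace α]
    [NormedAddCommGroup E] [NormedSpace ℝ E] {μ : Measure α} {l : Filter ι} {s : Set α}
    {F : ι → α → E} (hF : TendstoUniformlyOn F 0 l s) (hs : μ s ≠ ⊤) :
    Tendsto (fun i => ∫ x in s, F i x ∂μ) l (𝓝 0) := by
  rw [Metric.tendsto_nhds]
  intro ε hε
  have hμ : 0 ≤ μ.real s := measureReal_nonneg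
  filter_upwards [Metric.tendstoUniformlyOn_iff.1 hF (ε / (μ.real s + 1)) (by positivity)]
    with i hi
  have hbound : ∀ x ∈ s, ‖F i x‖ ≤ ε / (μ.real s + 1) := fun x hx => by
    simpa using (hi x hx).le
  calc dist (∫ x in s, F i x ∂μ) 0 ≤ ε / (μ.real s + 1) * μ.real s := by
        simpa using norm_setIntegral_le_of_norm_le_const hs.lt_top hbound
    _ < ε := by
        rw [div_mul_eq_mul_div, div_lt_iff₀ (by positivity)]
        nlinarith

theorem TendstoUniformlyOn.mul_sq_sub_apply {ι α : Type*} {l : Filter ι} {s : Set α}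
    {F : ι → α → ℝ} {c : ℝ} {w : α → ℝ} {B : ℝ} {b : α}
    (hF : TendstoUniformlyOn F (fun _ => c) l s) (hB : ∀ x ∈ s, ‖w x‖ ≤ B) (hb : b ∈ s) :
    TendstoUniformlyOn (fun i x => w x * (F i x - F i b) ^ 2) 0 l s := by
  have hB0 : 0 ≤ B := (norm_nonneg _).trans (hB b hb)
  rw [Metric.tendstoUniformlyOn_iff]
  intro ε hε
  set η := min 1 (ε / (4 * (B + 1)))
  have hη : 0 < η := lt_min one_pos (by positivity)
  filter_upwards [Metric.tendstoUniformlyOn_iff.1 hF η hη] with i hi x hx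
  have hdiff : |F i x - F i b| ≤ 2 * η := by
    have h₁ := hi x hx
    have h₂ := hi b hb
    rw [Real.dist_eq] at h₁ h₂
    linarith [abs_sub_le (F i x) c (F i b), abs_sub_comm c (F i x), abs_sub_comm c (F i b)]
  have hsq : (F i x - F i b) ^ 2 ≤ ε / (B + 1) := by
    calc (F i x - F i b) ^ 2 = |F i x - F i b| ^ 2 := (sq_abs _).symm
      _ ≤ (2 * η) ^ 2 := by gcongr
      _ ≤ 4 * (ε / (4 * (B + 1))) := by
        nlinarith [min_le_left 1 (ε / (4 * (B + 1))), min_le_right 1 (ε / (4 * (B + 1)))]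
      _ = ε / (B + 1) := by field_simp
  rw [Pi.zero_apply, dist_zero_left, norm_mul, norm_pow, Real.norm_eq_abs (_ - _), sq_abs]
  calc ‖w x‖ * (F i x - F i b) ^ 2 ≤ B * (ε / (B + 1)) :=
        mul_le_mul (hB x hx) hsq (sq_nonneg _) hB0
    _ < ε := by
        rw [mul_div_assoc', div_lt_iff₀ (by positivity)]
        nlinarith

theorem sqC_subset_closedBall (c : E2) (r : ℝ) : sqC c r ⊆ Metric.closedBall c r := by
  rintro x ⟨h0, h1⟩
  rw [Metric.mem_closedBall, EuclideanSpace.dist_eq, Fin.sum_univ_two, Real.dist_eq,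
    Real.dist_eq, Real.sqrt_le_left (by linarith [abs_nonneg (x 0 - c 0)])]
  nlinarith [sq_abs (x 0 - c 0), sq_abs (x 1 - c 1), abs_nonneg (x 0 - c 0),
    abs_nonneg (x 1 - c 1)]

theorem isClosed_sqC (c : E2) (r : ℝ) : IsClosed (sqC c r) := by
  have hcoord (i : Fin 2) : IsClosed {x : E2 | |x i - c i| ≤ r / 2} :=
    isClosed_le (by fun_prop) continuous_const
  exact (hcoord 0).inter (hcoord 1)

theorem isCompact_sqC (c : E2) (r : ℝ) : IsCompact (sqC c r) :=
  Metric.isCompact_of_isClosed_isBounded (isClosed_sqC c r)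
    (Metric.isBounded_closedBall.subset (sqC_subset_closedBall c r))

theorem half_le_norm_of_mem_sqC_jv {j : ℤ × ℤ} (hj : j ≠ 0) {x : E2} (hx : x ∈ sqC (jv j) 1) :
    1 / 2 ≤ ‖x‖ := by
  obtain ⟨i, hi⟩ : ∃ i, 1 ≤ |jv j i| := by
    rcases j with ⟨j₁, j₂⟩
    by_cases h₁ : j₁ = 0
    · refine ⟨1, ?_⟩
      have h₂ : j₂ ≠ 0 := by rintro rfl; exact hj (by simp [h₁])
      simpa [jv] using (Int.cast_le (R := ℝ)).2 (Int.one_le_abs h₂)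
    · exact ⟨0, by simpa [jv] using (Int.cast_le (R := ℝ)).2 (Int.one_le_abs h₁)⟩
  have hxi : |x i - jv j i| ≤ 1 / 2 := by fin_cases i; exacts [hx.1, hx.2]
  have := PiLp.norm_apply_le x i
  rw [Real.norm_eq_abs] at this
  linarith [abs_sub_abs_le_abs_sub (jv j i) (x i), abs_sub_comm (jv j i) (x i)]

theorem stmt5_general (α : ℝ)
    (L : ℝ → ℝ) (hLpos : ∀ x : ℝ, 0 < x → 0 < L x)
    (hSV : SlowlyVaryingAtZero L)
    (hA1 : ContDiffOn ℝ 1 L (Set.Ioi 0))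
    (j : ℤ × ℤ) (hj : j ≠ 0) (bj : E2) (hbj : bj ∈ sqC (jv j) 1) :
    Tendsto (fun n : ℕ => ∫ x in sqC (jv j) 1,
        ‖x‖ ^ (2 * α) * (L (‖x‖ / n) / L (1 / n) - L (‖bj‖ / n) / L (1 / n)) ^ 2)
      atTop (nhds 0) := by
  set s := sqC (jv j) 1
  have hs : IsCompact s := isCompact_sqC _ _
  have hnorm : s ⊆ norm ⁻¹' Icc (1 / 2) (‖jv j‖ + 1) := fun x hx =>
    ⟨half_le_norm_of_mem_sqC_jv hj hx, norm_le_of_mem_closedBall (sqC_subset_closedBall _ _ hx)⟩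
  have hratio := ((hSV.tendstoUniformlyOn_div hLpos hA1.continuousOn (b := ‖jv j‖ + 1)
    one_half_pos).comp norm).mono hnorm
  have hF : TendstoUniformlyOn (fun (n : ℕ) (x : E2) => L (‖x‖ / n) / L (1 / n))
      (fun _ => 1) atTop s := by
    have hinv : Tendsto (fun n : ℕ => (n : ℝ)⁻¹) atTop (𝓝[>] 0) :=
      tendsto_inv_atTop_nhdsGT_zero.comp tendsto_natCast_atTop_atTop
    refine TendstoUniformlyOn.congr (fun u hu => hinv.eventually (hratio u hu))
      (Eventually.of_forall fun n x _ => ?_)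
    simp [div_eq_mul_inv]
  have hw : ContinuousOn (fun x : E2 => ‖x‖ ^ (2 * α)) s := fun x hx =>
    ((continuousAt_rpow_const _ _ (Or.inl (by linarith [(hnorm hx).1]))).comp
      continuous_norm.continuousAt).continuousWithinAt
  obtain ⟨B, hB⟩ := hs.exists_bound_of_continuousOn hw
  exact (hF.mul_sq_sub_apply hB hbj).tendsto_setIntegral_zero hs.measure_lt_top.ne

theorem stmt5 (α : ℝ)
    (L : ℝ → ℝ) (hLpos : ∀ x : ℝ, 0 < x → 0 < L x)
    (hSV : SlowlyVaryingAtZero L)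
    (hA1 : ContDiffOn ℝ 1 L (Set.Ioi 0))
    (hA1' : ∀ u : ℝ, 0 < u → ∃ ε > (0 : ℝ), ∀ x ∈ Set.Ioc u (Real.sqrt 2), ε ≤ L x)
    (C : ℝ) (hC : 0 < C)
    (hA4 : ∀ x ∈ Set.Ioc (0 : ℝ) 1, |deriv L x| ≤ C * (1 + x⁻¹))
    (j : ℤ × ℤ) (hj : j ≠ 0) (bj : E2) (hbj : bj ∈ sqC (jv j) 1) :
    Tendsto (fun n : ℕ => ∫ x in sqC (jv j) 1,
        ‖x‖ ^ (2 * α) * (L (‖x‖ / n) / L (1 / n) - L (‖bj‖ / n) / L (1 / n)) ^ 2)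
      atTop (nhds 0) :=
  stmt5_general α L hLpos hSV hA1 j hj bj hbj
end
end

section
/- For every α < 0, every κ ∈ ℕ₀, and every choice of points b_j ∈ □j for j ∈ ℤ²\K_κ, the constant J(α,κ,b) = Σ_{j ∈ ℤ²\K_κ} ∫_{□j} (‖x‖^α − ‖b_j‖^α)² dx is finite. -/
/-!
For `j ∉ K_κ` we have `‖j‖_∞ ≥ 1`, so every point of `□j` has norm at least `‖j‖_∞ / 2`, and two
points of `□j` are at most `√2` apart. On `[m, ∞)` the map `t ↦ t ^ α` is Lipschitz with constant
`|α| m ^ (α - 1)`, so the integrand on `□j` is `O(‖j‖_∞ ^ (2α - 2))`, and `□j` has area one. Since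
`2α - 2 < -2`, these bounds are summable over `ℤ²`.
-/

open MeasureTheory Filter Set Real

noncomputable section

/-- `K_κ = {-κ,…,κ}² ⊆ ℤ²`. -/
def Kfin (κ : ℕ) : Finset (ℤ × ℤ) :=
  Finset.Icc (-(κ : ℤ)) (κ : ℤ) ×ˢ Finset.Icc (-(κ : ℤ)) (κ : ℤ)

lemma abs_rpow_sub_rpow_le {α m s t : ℝ} (hα : α ≤ 1) (hm : 0 < m) (hs : m ≤ s) (ht : m ≤ t) :
    |s ^ α - t ^ α| ≤ |α| * m ^ (α - 1) * |s - t| := by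
  have hderiv : ∀ x ∈ Ici m, HasDerivWithinAt (fun u : ℝ => u ^ α) (α * x ^ (α - 1)) (Ici m) x :=
    fun x hx => (hasDerivAt_rpow_const (Or.inl (hm.trans_le hx).ne')).hasDerivWithinAt
  have hbound : ∀ x ∈ Ici m, ‖α * x ^ (α - 1)‖ ≤ |α| * m ^ (α - 1) := by
    intro x hx
    rw [norm_eq_abs, abs_mul, abs_of_nonneg (rpow_nonneg (hm.le.trans hx) _)]
    exact mul_le_mul_of_nonneg_left (rpow_le_rpow_of_nonpos hm hx (by linarith)) (abs_nonneg α)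
  simpa [norm_eq_abs] using
    (convex_Ici m).norm_image_sub_le_of_norm_hasDerivWithin_le hderiv hbound ht hs

lemma mem_sqC_iff {c x : E2} {r : ℝ} : x ∈ sqC c r ↔ ∀ i, |x i - c i| ≤ r / 2 := by
  simp [sqC, Fin.forall_fin_two]

lemma volume_sqC (c : E2) (r : ℝ) : volume (sqC c r) = ENNReal.ofReal r ^ 2 := by
  have hpi : sqC c r = (MeasurableEquiv.toLp 2 (Fin 2 → ℝ)).symm ⁻¹'
      univ.pi fun i => Icc (c i - r / 2) (c i + r / 2) := by
    ext x
    simp only [mem_sqC_iff, abs_sub_le_iff, mem_preimage, mem_univ_pi, mem_Icc,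
      MeasurableEquiv.coe_toLp_symm]
    exact forall_congr' fun i => by constructor <;> rintro ⟨h₁, h₂⟩ <;> constructor <;> linarith
  rw [hpi, (EuclideanSpace.volume_preserving_symm_measurableEquiv_toLp (Fin 2)).measure_preimage
    (MeasurableSet.univ_pi fun _ => measurableSet_Icc).nullMeasurableSet, volume_pi_pi]
  simp [Real.volume_Icc]

lemma abs_sub_half_le_norm_of_mem_sqC {c x : E2} {r : ℝ} (hx : x ∈ sqC c r) (i : Fin 2) :
    |c i| - r / 2 ≤ ‖x‖ := by
  have hxi : |c i| - |x i| ≤ r / 2 :=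
    (abs_sub_abs_le_abs_sub _ _).trans ((abs_sub_comm _ _).trans_le (mem_sqC_iff.mp hx i))
  have := PiLp.norm_apply_le x i
  rw [norm_eq_abs] at this
  linarith

lemma norm_sub_le_of_mem_sqC {c x y : E2} {r : ℝ} (hx : x ∈ sqC c r) (hy : y ∈ sqC c r) :
    ‖x - y‖ ≤ √2 * r := by
  have hcoord : ∀ i, |x i - y i| ^ 2 ≤ r ^ 2 := fun i => by
    have h := (abs_sub_le (x i) (c i) (y i)).trans
      (add_le_add (mem_sqC_iff.mp hx i) ((abs_sub_comm _ _).trans_le (mem_sqC_iff.mp hy i)))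
    exact pow_le_pow_left₀ (abs_nonneg _) (by linarith) 2
  have hr : 0 ≤ r := by linarith [abs_nonneg (x 0 - c 0), mem_sqC_iff.mp hx 0]
  rw [EuclideanSpace.norm_eq, ← sqrt_sq hr, ← sqrt_mul zero_le_two]
  refine sqrt_le_sqrt ?_
  simpa [Fin.sum_univ_two, two_mul] using add_le_add (hcoord 0) (hcoord 1)

lemma norm_sub_half_le_norm_of_mem_sqC_jv {j : ℤ × ℤ} {x : E2} (hx : x ∈ sqC (jv j) 1) :
    ‖j‖ - 1 / 2 ≤ ‖x‖ := by
  rw [sub_le_iff_le_add, Prod.norm_def, max_le_iff, Int.norm_eq_abs, Int.norm_eq_abs]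
  constructor
  · simpa [jv] using abs_sub_half_le_norm_of_mem_sqC hx 0
  · simpa [jv] using abs_sub_half_le_norm_of_mem_sqC hx 1

lemma one_le_norm_of_notMem_Kfin {κ : ℕ} {j : ℤ × ℤ} (hj : j ∉ Kfin κ) : 1 ≤ ‖j‖ := by
  have hj0 : j ≠ 0 := by
    rintro rfl
    exact hj (by simp [Kfin])
  have hcoord : j.1 ≠ 0 ∨ j.2 ≠ 0 := by
    contrapose! hj0
    exact Prod.ext hj0.1 hj0.2
  rw [Prod.norm_def, Int.norm_eq_abs, Int.norm_eq_abs]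
  rcases hcoord with h | h
  · exact le_max_of_le_left (mod_cast Int.one_le_abs h)
  · exact le_max_of_le_right (mod_cast Int.one_le_abs h)

lemma summable_norm_rpow_of_lt_neg_two {p : ℝ} (hp : p < -2) :
    Summable fun j : ℤ × ℤ => ‖j‖ ^ p := by
  have hnorm : ∀ j : ℤ × ℤ, ‖(finTwoArrowEquiv ℤ).symm j‖ = ‖j‖ := fun j => by
    simp [EisensteinSeries.norm_eq_max_natAbs, Prod.norm_def, Int.norm_eq_abs]
  refine ((finTwoArrowEquiv ℤ).symm.summable_iff.mpr
    (EisensteinSeries.summable_one_div_norm_rpow (k := -p) (by linarith))).congr fun j => ?_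
  simp only [Function.comp_apply, hnorm, neg_neg]

lemma sq_rpow_norm_sub_rpow_norm_le {α : ℝ} (hα : α ≤ 1) {j : ℤ × ℤ} (hj : 1 ≤ ‖j‖) {x y : E2}
    (hx : x ∈ sqC (jv j) 1) (hy : y ∈ sqC (jv j) 1) :
    (‖x‖ ^ α - ‖y‖ ^ α) ^ 2 ≤ 2 * α ^ 2 * (‖j‖ / 2) ^ (2 * α - 2) := by
  have hxj := norm_sub_half_le_norm_of_mem_sqC_jv hx
  have hyj := norm_sub_half_le_norm_of_mem_sqC_jv hy
  have hdist : |‖x‖ - ‖y‖| ≤ √2 := by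
    simpa using (abs_norm_sub_norm_le x y).trans (norm_sub_le_of_mem_sqC hx hy)
  have hlip := abs_rpow_sub_rpow_le (s := ‖x‖) (t := ‖y‖) hα (by linarith : 0 < ‖j‖ / 2)
    (by linarith) (by linarith)
  calc (‖x‖ ^ α - ‖y‖ ^ α) ^ 2 = |‖x‖ ^ α - ‖y‖ ^ α| ^ 2 := (sq_abs _).symm
    _ ≤ (|α| * (‖j‖ / 2) ^ (α - 1) * √2) ^ 2 := by
      gcongr
      exact hlip.trans (by gcongr)
    _ = 2 * α ^ 2 * (‖j‖ / 2) ^ (2 * α - 2) := by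
      rw [show 2 * α - 2 = (α - 1) * (2 : ℕ) by push_cast; ring,
        rpow_mul_natCast (by positivity), mul_pow, mul_pow, sq_abs, sq_sqrt zero_le_two]
      ring

lemma setLIntegral_sqC_jv_le {α : ℝ} (hα : α ≤ 1) {j : ℤ × ℤ} (hj : 1 ≤ ‖j‖) {y : E2}
    (hy : y ∈ sqC (jv j) 1) :
    ∫⁻ x in sqC (jv j) 1, ENNReal.ofReal ((‖x‖ ^ α - ‖y‖ ^ α) ^ 2)
      ≤ ENNReal.ofReal (2 * α ^ 2 * (‖j‖ / 2) ^ (2 * α - 2)) :=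
  calc ∫⁻ x in sqC (jv j) 1, ENNReal.ofReal ((‖x‖ ^ α - ‖y‖ ^ α) ^ 2)
      ≤ ∫⁻ _ in sqC (jv j) 1, ENNReal.ofReal (2 * α ^ 2 * (‖j‖ / 2) ^ (2 * α - 2)) :=
        setLIntegral_mono measurable_const fun x hx =>
          ENNReal.ofReal_le_ofReal (sq_rpow_norm_sub_rpow_norm_le hα hj hx hy)
    _ = ENNReal.ofReal (2 * α ^ 2 * (‖j‖ / 2) ^ (2 * α - 2)) := by
        rw [setLIntegral_const, volume_sqC]
        simp

theorem stmt7 (α : ℝ) (hα : α < 0) (κ : ℕ) (b : ℤ × ℤ → E2)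
    (hb : ∀ j : ℤ × ℤ, j ∉ Kfin κ → b j ∈ sqC (jv j) 1) :
    (∑' j : {j : ℤ × ℤ // j ∉ Kfin κ},
        ∫⁻ x in sqC (jv j.1) 1, ENNReal.ofReal ((‖x‖ ^ α - ‖b j.1‖ ^ α) ^ 2)) < ⊤ := by
  set g : ℤ × ℤ → ℝ := fun j => 2 * α ^ 2 * (‖j‖ / 2) ^ (2 * α - 2)
  have hg_nonneg : ∀ j, 0 ≤ g j := fun j => by positivity
  have hg : Summable g := by
    simp_rw [g, div_rpow (norm_nonneg _) zero_le_two]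
    exact ((summable_norm_rpow_of_lt_neg_two (by linarith)).div_const _).mul_left _
  calc (∑' j : {j : ℤ × ℤ // j ∉ Kfin κ},
        ∫⁻ x in sqC (jv j.1) 1, ENNReal.ofReal ((‖x‖ ^ α - ‖b j.1‖ ^ α) ^ 2))
      ≤ ∑' j : {j : ℤ × ℤ // j ∉ Kfin κ}, ENNReal.ofReal (g j) :=
        ENNReal.tsum_le_tsum fun ⟨j, hj⟩ =>
          setLIntegral_sqC_jv_le (by linarith) (one_le_norm_of_notMem_Kfin hj) (hb j hj)
    _ = ENNReal.ofReal (∑' j : {j : ℤ × ℤ // j ∉ Kfin κ}, g j) :=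
        (ENNReal.ofReal_tsum_of_nonneg (fun j : {j // j ∉ Kfin κ} => hg_nonneg j)
          (hg.subtype {j | j ∉ Kfin κ})).symm
    _ < ⊤ := ENNReal.ofReal_lt_top
end
end
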